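/- Let K be a commutative ring with unity, let v, w : ℤ → K, and let α, β ∈ ℤ. For all natural numbers m₁, m₂, and n, the V-Stirling numbers of the second kind satisfy the convolution identity S^V_{α,β}[m₁+m₂, n] = ∑_{k=0}^{n} S^V_{α+k,β}[m₁, n-k] · S^V_{α,β+n-k}[m₂, k]. -/
import Mathlib


open Finset Polynomial

variable {K : Type*} [CommRing K]

/-- Elementary symmetric function `e_t` of the entries of a list. -/
def esymmList : List K → ℕ → K
  | _, 0 => 1
  | [], _ + 1 => 0
  | a :: l, t + 1 => a * esymmList l t + esymmList l (t + 1)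

/-- Complete homogeneous symmetric function `h_t` of the entries of a list. -/
def hsymmList : List K → ℕ → K
  | _, 0 => 1
  | [], _ + 1 => 0
  | a :: l, t + 1 => a * hsymmList (a :: l) t + hsymmList l (t + 1)
  termination_by l t => (l.length, t)

/-- The V-Stirling number of the first kind
`c^V_{α,β}[n,k] = e_{n-k}(v(α+n-1)w(β), …, v(α)w(β+n-1))`,
set to `0` unless `0 ≤ k ≤ n`. -/
def cV (v w : ℤ → K) (α β n k : ℤ) : K :=
  if 0 ≤ k ∧ k ≤ n then
    esymmList (List.ofFn fun j : Fin n.toNat =>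
      v (α + n - 1 - (j : ℕ)) * w (β + (j : ℕ))) (n - k).toNat
  else 0

/-- The V-Stirling number of the second kind
`S^V_{α,β}[n,k] = h_{n-k}(v(α+k)w(β), …, v(α)w(β+k))`,
set to `0` unless `0 ≤ k ≤ n`. -/
def SV (v w : ℤ → K) (α β n k : ℤ) : K :=
  if 0 ≤ k ∧ k ≤ n then
    hsymmList (List.ofFn fun j : Fin (k.toNat + 1) =>
      v (α + k - (j : ℕ)) * w (β + (j : ℕ))) (n - k).toNat
  else 0

lemma hsymmList_zero (l : List K) : hsymmList l 0 = 1 := by cases l <;> rw [hsymmList]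

lemma hsymmList_nil_succ (t : ℕ) : hsymmList ([] : List K) (t+1) = 0 := by rw [hsymmList]

lemma hsymmList_cons (a : K) (l : List K) (t : ℕ) :
    hsymmList (a :: l) (t+1) = a * hsymmList (a :: l) t + hsymmList l (t+1) := by
  rw [hsymmList]

lemma hsymmList_sub (a b : K) (l : List K) (t : ℕ) :
    hsymmList (a :: l) (t+1) - hsymmList (b :: l) (t+1)
      = (a - b) * hsymmList (a :: b :: l) t := by
  induction t with
  | zero => rw [hsymmList_cons, hsymmList_cons, hsymmList_zero, hsymmList_zero, hsymmList_zero]; ring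
  | succ t ih =>
    rw [hsymmList_cons a l (t+1), hsymmList_cons b l (t+1), hsymmList_cons a (b::l) t]
    linear_combination a * ih

lemma hsymmList_swap (a b : K) (l : List K) (t : ℕ) :
    hsymmList (a :: b :: l) t = hsymmList (b :: a :: l) t := by
  induction t with
  | zero => rw [hsymmList_zero, hsymmList_zero]
  | succ t ih =>
    rw [hsymmList_cons a (b::l), hsymmList_cons b (a::l), ih]
    linear_combination hsymmList_sub b a l t

lemma hsymmList_perm {l l' : List K} (h : l.Perm l') : ∀ t, hsymmList l t = hsymmList l' t := by
  induction h with
  | nil => intro t; rfl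
  | cons a h ih =>
    intro t
    induction t with
    | zero => rw [hsymmList_zero, hsymmList_zero]
    | succ t iht => rw [hsymmList_cons, hsymmList_cons, iht, ih]
  | swap a b l => intro t; exact hsymmList_swap b a l t
  | trans h1 h2 ih1 ih2 => intro t; rw [ih1, ih2]

lemma hsymmList_concat (l : List K) (a : K) (t : ℕ) :
    hsymmList (l ++ [a]) (t+1) = a * hsymmList (l ++ [a]) t + hsymmList l (t+1) := by
  have hp : (l ++ [a]).Perm (a :: l) := by
    simpa using List.perm_append_comm (l₁ := l) (l₂ := [a])
  rw [hsymmList_perm hp (t+1), hsymmList_cons, hsymmList_perm hp t]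

lemma SV_eq (v w : ℤ → K) (α β : ℤ) (N k : ℕ) (h : k ≤ N) :
    SV v w α β N k = hsymmList (List.ofFn fun j : Fin (k + 1) =>
      v (α + k - (j:ℕ)) * w (β + (j:ℕ))) (N - k) := by
  rw [SV, if_pos ⟨Int.natCast_nonneg k, by exact_mod_cast h⟩]
  have h1 : ((k:ℤ)).toNat = k := by omega
  have h2 : ((N:ℤ) - k).toNat = N - k := by omega
  rw [h2]
  congr 1

lemma SV_zero (v w : ℤ → K) (α β n k : ℤ) (h : ¬ (0 ≤ k ∧ k ≤ n)) :
    SV v w α β n k = 0 := by rw [SV, if_neg h]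

lemma SV_rec (v w : ℤ → K) (α β : ℤ) (N k : ℕ) :
    SV v w α β ((N + 1 : ℕ)) k = v α * w (β + k) * SV v w α β N k
      + SV v w (α + 1) β N ((k : ℤ) - 1) := by
  rcases lt_trichotomy k (N + 1) with hk | hk | hk
  · -- k ≤ N, main case
    have hkN : k ≤ N := by omega
    rw [SV_eq v w α β (N+1) k (by omega), SV_eq v w α β N k hkN]
    have hd : N + 1 - k = (N - k) + 1 := by omega
    have hL : (List.ofFn fun j : Fin (k + 1) => v (α + k - (j:ℕ)) * w (β + (j:ℕ)))
        = (List.ofFn fun j : Fin k => v (α + k - (j:ℕ)) * w (β + (j:ℕ)))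
          ++ [v α * w (β + k)] := by
      rw [List.ofFn_succ', List.concat_eq_append, Fin.val_last, add_sub_cancel_right]
      simp [Fin.coe_castSucc]
    rw [hd, hL, hsymmList_concat, ← hL]
    congr 1
    rcases Nat.eq_zero_or_pos k with h0 | hpos
    · subst h0
      rw [SV_zero _ _ _ _ _ _ (by norm_num)]
      simp [hsymmList_nil_succ]
    · obtain ⟨k', rfl⟩ : ∃ k', k = k' + 1 := ⟨k - 1, by omega⟩
      have hc : ((k' + 1 : ℕ) : ℤ) - 1 = ((k' : ℕ) : ℤ) := by push_cast; ring
      rw [hc, SV_eq v w (α+1) β N k' (by omega)]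
      have hd2 : N - k' = (N - (k' + 1)) + 1 := by omega
      rw [hd2]
      congr 1
      refine congrArg _ (funext fun j => ?_)
      congr 2 <;> push_cast <;> ring
  · -- k = N + 1
    subst hk
    rw [SV_eq v w α β (N+1) (N+1) le_rfl]
    have h1 : ((N + 1 : ℕ) : ℤ) - 1 = ((N : ℕ) : ℤ) := by push_cast; ring
    rw [h1, SV_eq v w (α+1) β N N le_rfl,
      SV_zero v w α β ((N : ℕ) : ℤ) (((N+1 : ℕ)) : ℤ) (by push_cast; omega)]
    simp [hsymmList_zero]
  · -- k > N + 1
    rw [SV_zero v w α β (((N+1 : ℕ)) : ℤ) ((k : ℕ) : ℤ) (by push_cast; omega),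
      SV_zero v w α β ((N : ℕ) : ℤ) ((k : ℕ) : ℤ) (by push_cast; omega),
      SV_zero v w (α+1) β ((N : ℕ) : ℤ) ((k:ℤ) - 1) (by push_cast; omega)]
    ring

lemma SV_conv (v w : ℤ → K) (m₁ m₂ : ℕ) : ∀ (n : ℕ) (α β : ℤ),
    SV v w α β ((m₁ + m₂ : ℕ)) n =
      ∑ k ∈ Finset.range (n + 1),
        SV v w (α + k) β m₁ ((n - k : ℕ)) * SV v w α (β + ((n - k : ℕ) : ℤ)) m₂ k := by
  induction m₂ with
  | zero =>
    intro n α β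
    rw [Finset.sum_range_succ']
    have hz : ∀ k ∈ Finset.range n,
        SV v w (α + (k+1 : ℕ)) β m₁ ((n - (k+1) : ℕ))
          * SV v w α (β + ((n - (k+1) : ℕ) : ℤ)) ((0:ℕ)) ((k+1 : ℕ)) = 0 := by
      intro k _
      rw [SV_zero v w α _ _ _ (by push_cast; omega), mul_zero]
    rw [Finset.sum_congr rfl hz, Finset.sum_const_zero, zero_add]
    have h1 : SV v w α (β + ((n - 0 : ℕ) : ℤ)) ((0:ℕ)) ((0:ℕ)) = 1 := by
      rw [SV_eq v w _ _ 0 0 le_rfl]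
      exact hsymmList_zero _
    rw [h1, mul_one]
    norm_num
  | succ m₂ ih =>
    intro n α β
    have hsplit : ∀ k ∈ Finset.range (n + 1),
        SV v w (α + k) β m₁ ((n - k : ℕ)) * SV v w α (β + ((n - k : ℕ) : ℤ)) ((m₂ + 1 : ℕ)) k
        = v α * w (β + n) * (SV v w (α + k) β m₁ ((n - k : ℕ))
            * SV v w α (β + ((n - k : ℕ) : ℤ)) m₂ k)
          + SV v w (α + k) β m₁ ((n - k : ℕ))
            * SV v w (α + 1) (β + ((n - k : ℕ) : ℤ)) m₂ ((k:ℤ) - 1) := by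
      intro k hk
      rw [Finset.mem_range] at hk
      rw [SV_rec v w α (β + ((n - k : ℕ) : ℤ)) m₂ k]
      have : β + ((n - k : ℕ) : ℤ) + k = β + n := by omega
      rw [this]; ring
    rw [Finset.sum_congr rfl hsplit, Finset.sum_add_distrib, ← Finset.mul_sum, ← ih n α β]
    have hsecond : ∑ k ∈ Finset.range (n + 1),
        SV v w (α + k) β m₁ ((n - k : ℕ))
          * SV v w (α + 1) (β + ((n - k : ℕ) : ℤ)) m₂ ((k:ℤ) - 1)
        = SV v w (α + 1) β ((m₁ + m₂ : ℕ)) ((n : ℤ) - 1) := by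
      rw [Finset.sum_range_succ']
      have h0 : SV v w (α + (0:ℕ)) β m₁ ((n - 0 : ℕ))
          * SV v w (α + 1) (β + ((n - 0 : ℕ) : ℤ)) m₂ (((0:ℕ):ℤ) - 1) = 0 := by
        rw [SV_zero v w (α+1) _ _ _ (by norm_num), mul_zero]
      rw [h0, add_zero]
      cases n with
      | zero =>
        rw [Finset.sum_range_zero, SV_zero v w (α+1) β _ _ (by norm_num)]
      | succ n' =>
        have hterm : ∀ k ∈ Finset.range (n' + 1),
            SV v w (α + (k+1 : ℕ)) β m₁ ((n' + 1 - (k+1) : ℕ))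
              * SV v w (α + 1) (β + ((n' + 1 - (k+1) : ℕ) : ℤ)) m₂ (((k+1:ℕ):ℤ) - 1)
            = SV v w ((α + 1) + k) β m₁ ((n' - k : ℕ))
              * SV v w (α + 1) (β + ((n' - k : ℕ) : ℤ)) m₂ k := by
          intro k hk
          have e1 : (n' + 1 - (k+1) : ℕ) = (n' - k : ℕ) := by omega
          have e2 : α + ((k+1 : ℕ) : ℤ) = (α + 1) + k := by push_cast; ring
          have e3 : (((k+1:ℕ):ℤ)) - 1 = ((k:ℕ):ℤ) := by push_cast; ring
          rw [e1, e2, e3]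
        rw [Finset.sum_congr rfl hterm, ← ih n' (α + 1) β]
        congr 1
        push_cast; ring
    rw [hsecond]
    have := SV_rec v w α β (m₁ + m₂) n
    rw [show m₁ + m₂ + 1 = m₁ + (m₂ + 1) from rfl] at this
    rw [this]

theorem SV_convolution (v w : ℤ → K) (α β : ℤ) (m₁ m₂ n : ℕ) :
    SV v w α β ((m₁ : ℕ) + (m₂ : ℕ)) (n : ℕ) =
      ∑ k ∈ Finset.range (n + 1),
        SV v w (α + (k : ℕ)) β (m₁ : ℕ) ((n - k : ℕ)) *
          SV v w α (β + ((n - k : ℕ) : ℕ)) (m₂ : ℕ) (k : ℕ) := by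
  exact SV_conv v w m₁ m₂ n α β
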